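/- arXiv:2309.00402 — 3 statements merged into one kernel-verified Lean document; each statement's English description precedes it below -/
import Mathlib

section
/- Let ν be a finite positive Borel measure on ℝ and β̃ ∈ ℝ, not both zero, and define f(z) = z + β̃ + ∫_ℝ dν(t)/(t−z) for z in the upper half-plane H. Then f maps H into H, and f is of zero hyperbolic step if and only if β̃ = 0. -/
/-!
Write `f z = z + β + S z` with `S z = ∫ dν(t) / (t - z)` and `K z = ∫ dν(t) / |t - z|²`.
Then `Im (f z) = Im z * (1 + K z)`, so `f` maps `H` into itself and `Im zₙ` increases along
every orbit. Along every orbit `K zₙ → 0`: either `Im zₙ → ∞` and `K ≤ ν(ℝ) / Im²`, or `Im zₙ`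
converges and its increments `Im zₙ * K zₙ` tend to `0`. By Cauchy–Schwarz `|S|² ≤ ν(ℝ) K`,
hence `S zₙ → 0`. The step `ρ(zₙ₊₁, zₙ) = |β + S zₙ| / |zₙ₊₁ - conj zₙ|` therefore tends to `0`
when `β = 0`. When `β ≠ 0` its numerator tends to `|β|`, so `ρ → 0` would force `Im zₙ → ∞`.
But once `Im zₙ ≥ 2 ν(ℝ) / |β|`, we have `|S zₙ| ≤ |β| / 2`, the real parts drift monotonically
at speed `≥ |β| / 2`, and so `∑ₙ 1 / |t - zₙ|²` is bounded uniformly in `t ∈ ℝ`. Integrating,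
`∑ₙ K zₙ` is bounded, and so is `Im zₙ = Im z₀ * ∏ (1 + K zₖ)`.
-/

open MeasureTheory Filter Complex Topology

/-- The pseudo-hyperbolic distance on the upper half-plane:
`ρ(z,w) = |z−w|/|z−conj w|`. -/
noncomputable def pseudoHyp (z w : ℂ) : ℝ :=
  ‖z - w‖ / ‖z - (starRingEnd ℂ) w‖

/-- `f` is of zero hyperbolic step: there exists `z` in the upper half-plane with
`ρ(f^[n+1] z, f^[n] z) → 0`. -/
def ZeroHS (f : ℂ → ℂ) : Prop :=
  ∃ z : ℂ, 0 < z.im ∧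
    Tendsto (fun n : ℕ => pseudoHyp (f^[n + 1] z) (f^[n] z)) atTop (𝓝 0)

/-- The self-map of the upper half-plane associated to `β̃` and the finite
measure `ν`: `f(z) = z + β̃ + ∫ dν(t)/(t−z)`. -/
noncomputable def gmap (β : ℝ) (ν : Measure ℝ) (z : ℂ) : ℂ :=
  z + (β : ℂ) + ∫ t : ℝ, 1 / ((t : ℂ) - z) ∂ν

theorem summable_inv_mul_nat_sq_add_sq {d : ℝ} (hd : d ≠ 0) (Y : ℝ) :
    Summable fun j : ℕ => ((d * j) ^ 2 + Y ^ 2)⁻¹ := by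
  refine (summable_nat_add_iff 1).1 <| Summable.of_nonneg_of_le (fun _ => by positivity)
    (fun j => ?_) ((summable_nat_add_iff 1).2 (Real.summable_nat_pow_inv.2 one_lt_two)
      |>.mul_left (d ^ 2)⁻¹)
  rw [← mul_inv, ← mul_pow]
  exact inv_anti₀ (by positivity) (le_add_of_nonneg_right (sq_nonneg Y))

open Finset in
theorem sum_inv_sq_add_sq_le_two_mul_tsum {u : ℕ → ℝ} {d Y : ℝ} (hd : 0 < d) (hY : 0 < Y)
    (hu : ∀ k, u k + d ≤ u (k + 1)) (m : ℕ) :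
    ∑ k ∈ range m, (u k ^ 2 + Y ^ 2)⁻¹ ≤ 2 * ∑' j : ℕ, ((d * j) ^ 2 + Y ^ 2)⁻¹ := by
  set φ : ℝ → ℝ := fun v => (v ^ 2 + Y ^ 2)⁻¹
  have hφ_nonneg (v : ℝ) : 0 ≤ φ v := by positivity
  have hφ_anti {v w : ℝ} (hw : 0 ≤ w) (hwv : w ≤ |v|) : φ v ≤ φ w :=
    inv_anti₀ (by positivity) (by nlinarith [sq_abs v, abs_nonneg v])
  have hpartial (n : ℕ) : ∑ j ∈ range n, φ (d * j) ≤ ∑' j : ℕ, φ (d * j) :=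
    (summable_inv_mul_nat_sq_add_sq hd.ne' Y).sum_le_tsum _ fun j _ => hφ_nonneg _
  have hgap (k j : ℕ) : u k + d * j ≤ u (k + j) := by
    induction j with
    | zero => simp
    | succ j ih => push_cast; rw [← add_assoc]; linarith [hu (k + j)]
  -- `a` is the first index with `u a ≥ 0`; on either side of it `|u|` grows at least linearly.
  have hex : ∃ a, 0 ≤ u a := by
    obtain ⟨j, hj⟩ := exists_nat_gt (-u 0 / d)
    exact ⟨j, by linarith [zero_add j ▸ hgap 0 j, (div_lt_iff₀ hd).1 hj]⟩
  set a := Nat.find hex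
  have hbefore : ∑ k ∈ range a, φ (u k) ≤ ∑ j ∈ range a, φ (d * j) := by
    rw [← sum_range_reflect (fun j => φ (d * j))]
    refine sum_le_sum fun k hk => hφ_anti (by positivity) ?_
    have hka : k < a := mem_range.1 hk
    have hlast : u (a - 1) < 0 := not_le.1 (Nat.find_min hex (by omega))
    have := hgap k (a - 1 - k)
    rw [show k + (a - 1 - k) = a - 1 by omega] at this
    rw [abs_of_neg (by linarith [mul_nonneg hd.le (Nat.cast_nonneg (α := ℝ) (a - 1 - k))])]
    linarith
  have hafter : ∑ j ∈ range m, φ (u (a + j)) ≤ ∑ j ∈ range m, φ (d * j) := by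
    refine sum_le_sum fun j _ => hφ_anti (by positivity) ?_
    linarith [hgap a j, Nat.find_spec hex, le_abs_self (u (a + j))]
  calc ∑ k ∈ range m, φ (u k) ≤ ∑ k ∈ range (a + m), φ (u k) :=
        sum_le_sum_of_subset_of_nonneg (range_subset_range.2 (by omega)) fun _ _ _ => hφ_nonneg _
    _ = ∑ k ∈ range a, φ (u k) + ∑ j ∈ range m, φ (u (a + j)) := sum_range_add _ _ _
    _ ≤ 2 * ∑' j : ℕ, φ (d * j) := by linarith [hpartial a, hpartial m]

noncomputable def stieltjes (ν : Measure ℝ) (z : ℂ) : ℂ :=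
  ∫ t : ℝ, 1 / ((t : ℂ) - z) ∂ν

noncomputable def invNormSqIntegral (ν : Measure ℝ) (z : ℂ) : ℝ :=
  ∫ t : ℝ, (normSq ((t : ℂ) - z))⁻¹ ∂ν

theorem normSq_ofReal_sub (t : ℝ) (z : ℂ) :
    normSq ((t : ℂ) - z) = (t - z.re) ^ 2 + z.im ^ 2 := by
  simp [normSq_apply]; ring

theorem im_le_norm_ofReal_sub (t : ℝ) (z : ℂ) : z.im ≤ ‖(t : ℂ) - z‖ :=
  calc z.im ≤ |((t : ℂ) - z).im| := by simp [le_abs_self]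
    _ ≤ ‖(t : ℂ) - z‖ := abs_im_le_norm _

section Kernel

variable {ν : Measure ℝ} {z : ℂ}

theorem invNormSqIntegral_nonneg : 0 ≤ invNormSqIntegral ν z :=
  integral_nonneg fun _ => inv_nonneg.2 (normSq_nonneg _)

variable [IsFiniteMeasure ν]

theorem norm_one_div_ofReal_sub_le (hz : 0 < z.im) (t : ℝ) : ‖1 / ((t : ℂ) - z)‖ ≤ z.im⁻¹ := by
  rw [norm_div, norm_one, one_div]
  exact inv_anti₀ hz (im_le_norm_ofReal_sub t z)

theorem integrable_one_div_ofReal_sub (hz : 0 < z.im) :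
    Integrable (fun t : ℝ => 1 / ((t : ℂ) - z)) ν := by
  have hne (t : ℝ) : (t : ℂ) - z ≠ 0 :=
    norm_pos_iff.1 (hz.trans_le (im_le_norm_ofReal_sub t z))
  refine (integrable_const z.im⁻¹).mono' ?_ (ae_of_all _ (norm_one_div_ofReal_sub_le hz))
  exact (continuous_const.div (continuous_ofReal.sub continuous_const) hne).aestronglyMeasurable

theorem inv_normSq_ofReal_sub_le (hz : 0 < z.im) (t : ℝ) :
    (normSq ((t : ℂ) - z))⁻¹ ≤ (z.im ^ 2)⁻¹ := by
  rw [normSq_ofReal_sub]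
  exact inv_anti₀ (by positivity) (le_add_of_nonneg_left (sq_nonneg _))

theorem integrable_inv_normSq_ofReal_sub (hz : 0 < z.im) :
    Integrable (fun t : ℝ => (normSq ((t : ℂ) - z))⁻¹) ν := by
  refine (integrable_const (z.im ^ 2)⁻¹).mono' ?_ (ae_of_all _ fun t => ?_)
  · exact (by fun_prop : Measurable fun t : ℝ => (normSq ((t : ℂ) - z))⁻¹).aestronglyMeasurable
  · rw [Real.norm_of_nonneg (inv_nonneg.2 (normSq_nonneg _))]
    exact inv_normSq_ofReal_sub_le hz t

theorem invNormSqIntegral_le (hz : 0 < z.im) :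
    invNormSqIntegral ν z ≤ ν.real Set.univ / z.im ^ 2 := by
  have := integral_mono (integrable_inv_normSq_ofReal_sub (ν := ν) hz) (integrable_const _)
    (inv_normSq_ofReal_sub_le hz)
  rwa [integral_const, smul_eq_mul, ← div_eq_mul_inv] at this

theorem im_stieltjes (hz : 0 < z.im) : (stieltjes ν z).im = z.im * invNormSqIntegral ν z := by
  rw [stieltjes, ← RCLike.im_to_complex, ← integral_im (integrable_one_div_ofReal_sub hz),
    invNormSqIntegral, ← integral_const_mul]
  congr 1 with t
  simp [div_eq_mul_inv]

theorem norm_stieltjes_le (hz : 0 < z.im) : ‖stieltjes ν z‖ ≤ ν.real Set.univ / z.im := by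
  rw [div_eq_inv_mul]
  exact norm_integral_le_of_norm_le_const (ae_of_all _ (norm_one_div_ofReal_sub_le hz))

-- Cauchy–Schwarz, via the discriminant of `ε ↦ ∫ (ε - 1/|t - z|)² dν ≥ 0`.
theorem norm_stieltjes_sq_le (hz : 0 < z.im) :
    ‖stieltjes ν z‖ ^ 2 ≤ ν.real Set.univ * invNormSqIntegral ν z := by
  set g : ℝ → ℝ := fun t => ‖1 / ((t : ℂ) - z)‖
  have hg : Integrable g ν := (integrable_one_div_ofReal_sub hz).norm
  have hg_sq (t : ℝ) : g t ^ 2 = (normSq ((t : ℂ) - z))⁻¹ := by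
    simp [g, normSq_eq_norm_sq]
  set J := ∫ t, g t ∂ν
  have hquad (ε : ℝ) : 0 ≤ ν.real Set.univ * (ε * ε) + (-2 * J) * ε + invNormSqIntegral ν z := by
    have := integral_mono (hg.const_mul (2 * ε))
      ((integrable_const (ε * ε)).add (integrable_inv_normSq_ofReal_sub hz))
      fun t => by simp only [Pi.add_apply]; nlinarith [sq_nonneg (ε - g t), hg_sq t]
    rw [integral_const_mul, integral_add' (integrable_const _)
      (integrable_inv_normSq_ofReal_sub hz), integral_const, smul_eq_mul] at this
    rw [invNormSqIntegral]; linarith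
  have hJ : J ^ 2 ≤ ν.real Set.univ * invNormSqIntegral ν z := by
    have := discrim_le_zero hquad
    rw [discrim] at this; nlinarith
  calc ‖stieltjes ν z‖ ^ 2 ≤ J ^ 2 :=
        pow_le_pow_left₀ (norm_nonneg _) (norm_integral_le_integral_norm _) 2
    _ ≤ _ := hJ

end Kernel

theorem pseudoHyp_le_norm_sub_div_im {z w : ℂ} (hz : 0 ≤ z.im) (hw : 0 < w.im) :
    pseudoHyp z w ≤ ‖z - w‖ / w.im :=
  div_le_div_of_nonneg_left (norm_nonneg _) hw <|
    (le_add_of_nonneg_left hz).trans_eq (by simp) |>.trans (im_le_norm _)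

theorem norm_sub_div_le_pseudoHyp {z w : ℂ} (hz : 0 ≤ z.im) (hw : 0 < w.im) :
    ‖z - w‖ / (‖z - w‖ + 2 * w.im) ≤ pseudoHyp z w := by
  have hpos : 0 < ‖z - (starRingEnd ℂ) w‖ :=
    (lt_add_of_nonneg_of_lt hz hw).trans_eq (by simp) |>.trans_le (im_le_norm _)
  refine div_le_div_of_nonneg_left (norm_nonneg _) hpos ?_
  calc ‖z - (starRingEnd ℂ) w‖ = ‖(z - w) + (w - (starRingEnd ℂ) w)‖ := by ring_nf
    _ ≤ ‖z - w‖ + ‖w - (starRingEnd ℂ) w‖ := norm_add_le _ _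
    _ = ‖z - w‖ + 2 * w.im := by
        rw [sub_conj, norm_mul, norm_I, mul_one, norm_real, Real.norm_of_nonneg (by positivity)]

section Orbit

variable {β : ℝ} {ν : Measure ℝ} {z : ℂ}

theorem gmap_sub_self : gmap β ν z - z = β + stieltjes ν z := by
  rw [gmap, stieltjes]; ring

variable [IsFiniteMeasure ν]

theorem im_gmap (hz : 0 < z.im) : (gmap β ν z).im = z.im * (1 + invNormSqIntegral ν z) := by
  rw [gmap, ← stieltjes]
  simp [im_stieltjes hz]; ring

theorem im_gmap_pos (hz : 0 < z.im) : 0 < (gmap β ν z).im := by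
  rw [im_gmap hz]
  have := invNormSqIntegral_nonneg (ν := ν) (z := z)
  positivity

theorem im_le_im_gmap (hz : 0 < z.im) : z.im ≤ (gmap β ν z).im := by
  rw [im_gmap hz]
  exact le_mul_of_one_le_right hz.le (le_add_of_nonneg_right invNormSqIntegral_nonneg)

theorem im_iterate_gmap_pos (hz : 0 < z.im) (n : ℕ) : 0 < ((gmap β ν)^[n] z).im := by
  induction n with
  | zero => exact hz
  | succ n ih => rw [Function.iterate_succ_apply']; exact im_gmap_pos ih

theorem monotone_im_iterate_gmap (hz : 0 < z.im) :
    Monotone fun n => ((gmap β ν)^[n] z).im :=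
  monotone_nat_of_le_succ fun n => by
    simp only [Function.iterate_succ_apply']
    exact im_le_im_gmap (im_iterate_gmap_pos hz n)

theorem im_le_im_iterate_gmap (hz : 0 < z.im) (n : ℕ) : z.im ≤ ((gmap β ν)^[n] z).im :=
  monotone_im_iterate_gmap hz n.zero_le

theorem im_iterate_gmap_eq_prod (hz : 0 < z.im) (n : ℕ) :
    ((gmap β ν)^[n] z).im =
      z.im * ∏ k ∈ Finset.range n, (1 + invNormSqIntegral ν ((gmap β ν)^[k] z)) := by
  induction n with
  | zero => simp
  | succ n ih =>
    rw [Function.iterate_succ_apply', im_gmap (im_iterate_gmap_pos hz n), ih,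
      Finset.prod_range_succ, mul_assoc]

theorem tendsto_invNormSqIntegral_iterate_gmap (hz : 0 < z.im) :
    Tendsto (fun n => invNormSqIntegral ν ((gmap β ν)^[n] z)) atTop (𝓝 0) := by
  set y := fun n => ((gmap β ν)^[n] z).im
  rcases tendsto_atTop_of_monotone (monotone_im_iterate_gmap (β := β) (ν := ν) hz)
    with htop | ⟨l, hl⟩
  · refine squeeze_zero (fun _ => invNormSqIntegral_nonneg)
      (fun n => invNormSqIntegral_le (im_iterate_gmap_pos hz n)) ?_
    exact tendsto_const_nhds.div_atTop ((tendsto_pow_atTop two_ne_zero).comp htop)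
  · -- `y (n + 1) - y n = y n * K n ≥ z.im * K n`
    have hdiff : Tendsto (fun n => (y (n + 1) - y n) / z.im) atTop (𝓝 0) := by
      have := ((hl.comp (tendsto_add_atTop_nat 1)).sub hl).div_const z.im
      rwa [sub_self, zero_div] at this
    refine squeeze_zero (fun _ => invNormSqIntegral_nonneg) (fun n => ?_) hdiff
    rw [le_div_iff₀ hz]
    have hstep : y (n + 1) = y n * (1 + invNormSqIntegral ν ((gmap β ν)^[n] z)) := by
      simp only [y, Function.iterate_succ_apply']
      exact im_gmap (im_iterate_gmap_pos hz n)
    nlinarith [im_le_im_iterate_gmap (β := β) (ν := ν) hz n,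
      invNormSqIntegral_nonneg (ν := ν) (z := (gmap β ν)^[n] z)]

theorem tendsto_stieltjes_iterate_gmap (hz : 0 < z.im) :
    Tendsto (fun n => stieltjes ν ((gmap β ν)^[n] z)) atTop (𝓝 0) := by
  rw [tendsto_zero_iff_norm_tendsto_zero]
  have hlim := ((tendsto_invNormSqIntegral_iterate_gmap (β := β) (ν := ν) hz).const_mul
    (ν.real Set.univ)).sqrt
  rw [mul_zero, Real.sqrt_zero] at hlim
  refine squeeze_zero (fun _ => norm_nonneg _) (fun n => ?_) hlim
  exact (Real.le_sqrt (norm_nonneg _) (mul_nonneg measureReal_nonneg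
    invNormSqIntegral_nonneg)).2 (norm_stieltjes_sq_le (im_iterate_gmap_pos hz n))

end Orbit

theorem zeroHS_gmap_zero (ν : Measure ℝ) [IsFiniteMeasure ν] : ZeroHS (gmap 0 ν) := by
  have hI : (0 : ℝ) < I.im := by simp
  have hlim := (tendsto_stieltjes_iterate_gmap (β := 0) (ν := ν) hI).norm.div_const I.im
  rw [norm_zero, zero_div] at hlim
  refine ⟨I, hI, squeeze_zero (fun _ => div_nonneg (norm_nonneg _) (norm_nonneg _))
    (fun n => ?_) hlim⟩
  have hpos := im_iterate_gmap_pos (β := 0) (ν := ν) hI n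
  rw [Function.iterate_succ_apply']
  calc _ ≤ ‖gmap 0 ν ((gmap 0 ν)^[n] I) - (gmap 0 ν)^[n] I‖ / ((gmap 0 ν)^[n] I).im :=
        pseudoHyp_le_norm_sub_div_im (im_gmap_pos hpos).le hpos
    _ ≤ ‖stieltjes ν ((gmap 0 ν)^[n] I)‖ / I.im := by
        rw [gmap_sub_self, ofReal_zero, zero_add]
        exact div_le_div_of_nonneg_left (norm_nonneg _) hI (im_le_im_iterate_gmap hI n)

section PositiveStep

variable {β : ℝ} {ν : Measure ℝ} {z : ℂ}

theorem sq_div_two_le_mul_re_gmap_sub (hS : 2 * ‖stieltjes ν z‖ ≤ |β|) :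
    β ^ 2 / 2 ≤ β * ((gmap β ν z).re - z.re) := by
  have hre : (gmap β ν z).re - z.re = β + (stieltjes ν z).re := by
    simpa using congrArg re (gmap_sub_self (β := β) (ν := ν) (z := z))
  have hcross : |β * (stieltjes ν z).re| ≤ |β| * ‖stieltjes ν z‖ := by
    rw [abs_mul]; exact mul_le_mul_of_nonneg_left (abs_re_le_norm _) (abs_nonneg β)
  rw [hre]
  nlinarith [neg_abs_le (β * (stieltjes ν z).re), sq_abs β,
    mul_le_mul_of_nonneg_left hS (abs_nonneg β)]

variable [IsFiniteMeasure ν]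

-- `hM` keeps `2 * ‖S zₖ‖ ≤ |β|` along the orbit, so `β * Re zₖ` grows by `≥ β² / 2` per step.
theorem exists_sum_inv_normSq_iterate_gmap_le (hβ : β ≠ 0) (hz : 0 < z.im)
    (hM : 2 * ν.real Set.univ ≤ |β| * z.im) :
    ∃ C, ∀ (t : ℝ) (n : ℕ),
      ∑ k ∈ Finset.range n, (normSq ((t : ℂ) - (gmap β ν)^[k] z))⁻¹ ≤ C := by
  have hS (k : ℕ) : 2 * ‖stieltjes ν ((gmap β ν)^[k] z)‖ ≤ |β| := by
    have hk := im_iterate_gmap_pos (β := β) (ν := ν) hz k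
    calc 2 * ‖stieltjes ν ((gmap β ν)^[k] z)‖ ≤ 2 * (ν.real Set.univ / z.im) := by
          gcongr
          exact (norm_stieltjes_le hk).trans (div_le_div_of_nonneg_left measureReal_nonneg hz
            (im_le_im_iterate_gmap hz k))
      _ ≤ |β| := by rw [← mul_div_assoc, div_le_iff₀ hz]; exact hM
  refine ⟨β ^ 2 * (2 * ∑' j : ℕ, ((β ^ 2 / 2 * j) ^ 2 + (|β| * z.im) ^ 2)⁻¹), fun t n => ?_⟩
  set u : ℕ → ℝ := fun k => β * (((gmap β ν)^[k] z).re - t)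
  have hu (k : ℕ) : u k + β ^ 2 / 2 ≤ u (k + 1) := by
    have := sq_div_two_le_mul_re_gmap_sub (hS k)
    simp only [u, Function.iterate_succ_apply']
    linarith
  have hterm (k : ℕ) : (normSq ((t : ℂ) - (gmap β ν)^[k] z))⁻¹ ≤
      β ^ 2 * (u k ^ 2 + (|β| * z.im) ^ 2)⁻¹ := by
    rw [show β ^ 2 * (u k ^ 2 + (|β| * z.im) ^ 2)⁻¹
        = ((t - ((gmap β ν)^[k] z).re) ^ 2 + z.im ^ 2)⁻¹ by
      simp only [u, mul_pow, sq_abs]; field_simp; ring, normSq_ofReal_sub]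
    exact inv_anti₀ (by positivity) (by nlinarith [im_le_im_iterate_gmap (β := β) (ν := ν) hz k])
  calc _ ≤ ∑ k ∈ Finset.range n, β ^ 2 * (u k ^ 2 + (|β| * z.im) ^ 2)⁻¹ :=
        Finset.sum_le_sum fun k _ => hterm k
    _ ≤ _ := by
        rw [← Finset.mul_sum]
        exact mul_le_mul_of_nonneg_left
          (sum_inv_sq_add_sq_le_two_mul_tsum (by positivity) (by positivity) hu n) (sq_nonneg β)

theorem exists_im_iterate_gmap_le_of_two_mul_le (hβ : β ≠ 0) (hz : 0 < z.im)
    (hM : 2 * ν.real Set.univ ≤ |β| * z.im) :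
    ∃ L, ∀ n, ((gmap β ν)^[n] z).im ≤ L := by
  obtain ⟨C, hC⟩ := exists_sum_inv_normSq_iterate_gmap_le hβ hz hM
  have hK (n : ℕ) :
      ∑ k ∈ Finset.range n, invNormSqIntegral ν ((gmap β ν)^[k] z) ≤ C * ν.real Set.univ := by
    simp only [invNormSqIntegral]
    rw [← integral_finsetSum _ fun k _ =>
      integrable_inv_normSq_ofReal_sub (im_iterate_gmap_pos hz k)]
    calc _ ≤ ∫ _ : ℝ, C ∂ν := integral_mono (integrable_finsetSum _ fun k _ =>
            integrable_inv_normSq_ofReal_sub (im_iterate_gmap_pos hz k))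
          (integrable_const C) fun t => hC t n
      _ = C * ν.real Set.univ := by rw [integral_const, smul_eq_mul, mul_comm]
  refine ⟨z.im * Real.exp (C * ν.real Set.univ), fun n => ?_⟩
  rw [im_iterate_gmap_eq_prod hz]
  refine mul_le_mul_of_nonneg_left ?_ hz.le
  calc ∏ k ∈ Finset.range n, (1 + invNormSqIntegral ν ((gmap β ν)^[k] z))
      ≤ ∏ k ∈ Finset.range n, Real.exp (invNormSqIntegral ν ((gmap β ν)^[k] z)) :=
        Finset.prod_le_prod (fun _ _ => add_nonneg zero_le_one invNormSqIntegral_nonneg)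
          fun k _ => by linarith [Real.add_one_le_exp (invNormSqIntegral ν ((gmap β ν)^[k] z))]
    _ = Real.exp (∑ k ∈ Finset.range n, invNormSqIntegral ν ((gmap β ν)^[k] z)) :=
        (Real.exp_sum _ _).symm
    _ ≤ Real.exp (C * ν.real Set.univ) := Real.exp_le_exp.2 (hK n)

theorem exists_im_iterate_gmap_le (hβ : β ≠ 0) (hz : 0 < z.im) :
    ∃ L, ∀ n, ((gmap β ν)^[n] z).im ≤ L := by
  by_cases h : ∀ n, |β| * ((gmap β ν)^[n] z).im < 2 * ν.real Set.univ
  · refine ⟨2 * ν.real Set.univ / |β|, fun n => ?_⟩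
    rw [le_div_iff₀ (abs_pos.2 hβ)]
    linarith [h n]
  · simp only [not_forall, not_lt] at h
    obtain ⟨N, hN⟩ := h
    obtain ⟨L, hL⟩ := exists_im_iterate_gmap_le_of_two_mul_le hβ (im_iterate_gmap_pos hz N) hN
    refine ⟨L, fun n => (monotone_im_iterate_gmap hz (n.le_add_right N)).trans ?_⟩
    simpa only [Function.iterate_add_apply] using hL n

theorem not_zeroHS_gmap (hβ : β ≠ 0) : ¬ ZeroHS (gmap β ν) := by
  rintro ⟨z, hz, hρ⟩
  obtain ⟨L, hL⟩ := exists_im_iterate_gmap_le (ν := ν) hβ hz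
  have hL0 : 0 < L := (im_iterate_gmap_pos hz 0).trans_le (hL 0)
  set a := |β| / 2
  have ha : 0 < a := half_pos (abs_pos.2 hβ)
  have hnum : ∀ᶠ n in atTop, a ≤ ‖(β : ℂ) + stieltjes ν ((gmap β ν)^[n] z)‖ := by
    have := ((tendsto_stieltjes_iterate_gmap (β := β) (ν := ν) hz).const_add (β : ℂ)).norm
    rw [add_zero, norm_real, Real.norm_eq_abs] at this
    exact this.eventually_const_le (half_lt_self (abs_pos.2 hβ))
  have hlow : ∀ᶠ n in atTop,
      a / (a + 2 * L) ≤ pseudoHyp ((gmap β ν)^[n + 1] z) ((gmap β ν)^[n] z) := by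
    filter_upwards [hnum] with n hn
    set p := ‖(β : ℂ) + stieltjes ν ((gmap β ν)^[n] z)‖
    have hpos := im_iterate_gmap_pos (β := β) (ν := ν) hz n
    rw [Function.iterate_succ_apply']
    calc a / (a + 2 * L) ≤ p / (p + 2 * L) := by
          rw [div_le_div_iff₀ (by positivity) (by positivity)]; nlinarith
      _ ≤ p / (p + 2 * ((gmap β ν)^[n] z).im) :=
          div_le_div_of_nonneg_left (norm_nonneg _) (by positivity) (by linarith [hL n])
      _ ≤ _ := by
          simp only [p]
          rw [← gmap_sub_self]
          exact norm_sub_div_le_pseudoHyp (im_gmap_pos hpos).le hpos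
  have hbound : 0 < a / (a + 2 * L) := by positivity
  obtain ⟨n, hlow_n, hρ_n⟩ := (hlow.and (hρ.eventually (gt_mem_nhds hbound))).exists
  exact (hlow_n.trans_lt hρ_n).false

end PositiveStep

theorem stmt_6_general (β : ℝ) (ν : Measure ℝ) [IsFiniteMeasure ν] :
    (∀ z : ℂ, 0 < z.im → 0 < (gmap β ν z).im) ∧
    (ZeroHS (gmap β ν) ↔ β = 0) := by
  refine ⟨fun z hz => im_gmap_pos hz, fun h => ?_, ?_⟩
  · by_contra hβ
    exact not_zeroHS_gmap hβ h
  · rintro rfl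
    exact zeroHS_gmap_zero ν

theorem stmt_6 (β : ℝ) (ν : Measure ℝ) [IsFiniteMeasure ν]
    (hnz : ¬ (β = 0 ∧ ν = 0)) :
    (∀ z : ℂ, 0 < z.im → 0 < (gmap β ν z).im) ∧
    (ZeroHS (gmap β ν) ↔ β = 0) :=
  stmt_6_general β ν
end

section
/- Let f(z) = z + β + ∫_ℝ (1+tz)/(t−z) dμ(t) on the upper half-plane H, where μ is a symmetric finite positive Borel measure with ∫_ℝ |t| dμ(t) = ∞ and β ≠ 0. Then for every z₀ ∈ H, |x_n|/(n·y_n) → 0 as n → ∞, where z_n = f^n(z₀), x_n = Re z_n, y_n = Im z_n. -/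
/-
Write `I(z) = ∫ (1 + t²) / |t - z|² dμ(t)` (`poissonMass`), so that `Im f(z) = Im z · (1 + I(z))`;
averaging the integrand over `t ↦ -t`, which leaves the symmetric `μ` invariant, turns it into
`z (1 + t²) / (t² - z²)`, whose real part is at most `|Re z| / Im z` times its imaginary part in
absolute value. Hence
`|Re f(z) - Re z - β| ≤ |Re z| · I(z)`, so `|x_n| / y_n` grows by at most `|β| / y_{n+1}` per
step and `|x_n| / (n y_n)` is bounded by `|x_0| / (n y_0)` plus `|β|` times a Cesàro mean of the
`1 / y_k`.

It remains to see `y_n → ∞`. If `y_n ≤ L` for all `n`, then `y_0 ∑ I(z_n) ≤ L`, the orbit grows at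
most linearly, `|z_n| ≤ a + b n`, and `μ {|t| ≥ |z_n|} ≤ 4 I(z_n)`; summing over `n` makes
`∫ |t| dμ` finite.
-/
open MeasureTheory Filter Complex Topology

/-- The parabolic self-map of the upper half-plane associated to `β` and `μ`:
`f(z) = z + β + ∫ (1+tz)/(t−z) dμ(t)`. -/
noncomputable def fmap (β : ℝ) (μ : Measure ℝ) (z : ℂ) : ℂ :=
  z + (β : ℂ) + ∫ t : ℝ, (1 + (t : ℂ) * z) / ((t : ℂ) - z) ∂μ

open scoped ENNReal

lemma abs_re_integral_le_of_abs_re_le {α : Type*} [MeasurableSpace α] {ν : Measure α}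
    {ζ : α → ℂ} (hζ : Integrable ζ ν) {c : ℝ} (h : ∀ a, |(ζ a).re| ≤ c * (ζ a).im) :
    |(∫ a, ζ a ∂ν).re| ≤ c * (∫ a, ζ a ∂ν).im := by
  have hre := integral_re hζ
  have him := integral_im hζ
  simp only [RCLike.re_to_complex, RCLike.im_to_complex] at hre him
  rw [← hre, ← him, ← integral_const_mul]
  exact abs_integral_le_integral_abs.trans (integral_mono hζ.re.abs (hζ.im.const_mul c) h)

lemma ofReal_le_add_mul_tsum_indicator (a : ℝ) {b : ℝ} (hb : 0 < b) (s : ℝ) :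
    ENNReal.ofReal s ≤
      ENNReal.ofReal a + ENNReal.ofReal b * ∑' n : ℕ, {n : ℕ | a + b * n ≤ s}.indicator 1 n := by
  rcases le_or_gt s a with hsa | hsa
  · exact le_add_right (ENNReal.ofReal_le_ofReal hsa)
  set m := ⌊(s - a) / b⌋₊
  have hs : s ≤ a + b * (m + 1) := by
    have := Nat.lt_floor_add_one ((s - a) / b)
    rw [div_lt_iff₀ hb] at this
    linarith
  have hmem : ∀ n ∈ Finset.range (m + 1), n ∈ {n : ℕ | a + b * n ≤ s} := by
    intro n hn
    have hn : (n : ℝ) ≤ (s - a) / b := (Nat.le_floor_iff (div_nonneg (by linarith) hb.le)).mp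
      (Nat.lt_succ_iff.mp (Finset.mem_range.mp hn))
    rw [le_div_iff₀ hb] at hn
    show a + b * n ≤ s
    linarith
  have hcount : ((m + 1 : ℕ) : ℝ≥0∞) ≤ ∑' n : ℕ, {n : ℕ | a + b * n ≤ s}.indicator 1 n :=
    calc ((m + 1 : ℕ) : ℝ≥0∞)
        = ∑ n ∈ Finset.range (m + 1), {n : ℕ | a + b * n ≤ s}.indicator 1 n := by
          rw [Finset.sum_congr rfl fun n hn => Set.indicator_of_mem (hmem n hn) 1]
          simp
      _ ≤ _ := ENNReal.sum_le_tsum _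
  calc ENNReal.ofReal s ≤ ENNReal.ofReal (a + b * (m + 1)) := ENNReal.ofReal_le_ofReal hs
    _ ≤ ENNReal.ofReal a + ENNReal.ofReal b * ((m + 1 : ℕ) : ℝ≥0∞) := by
      rw [← ENNReal.ofReal_natCast, ← ENNReal.ofReal_mul hb.le]
      push_cast
      exact ENNReal.ofReal_add_le
    _ ≤ _ := by gcongr

lemma integrable_of_tsum_measure_le_abs_ne_top {α : Type*} [MeasurableSpace α] {ν : Measure α}
    [IsFiniteMeasure ν] {f : α → ℝ} (hf : Measurable f) (a : ℝ) {b : ℝ} (hb : 0 < b)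
    (h : ∑' n : ℕ, ν {x | a + b * n ≤ |f x|} ≠ ∞) : Integrable f ν := by
  set E : ℕ → Set α := fun n => {x | a + b * n ≤ |f x|}
  have hE : ∀ n, MeasurableSet (E n) := fun n => measurableSet_le measurable_const hf.abs
  refine ⟨hf.aestronglyMeasurable, ?_⟩
  rw [hasFiniteIntegral_iff_norm]
  simp only [Real.norm_eq_abs]
  calc ∫⁻ x, ENNReal.ofReal |f x| ∂ν
      ≤ ∫⁻ x, ENNReal.ofReal a + ENNReal.ofReal b * ∑' n, (E n).indicator 1 x ∂ν :=
        lintegral_mono fun x => ofReal_le_add_mul_tsum_indicator a hb |f x|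
    _ = ENNReal.ofReal a * ν Set.univ + ENNReal.ofReal b * ∑' n, ν (E n) := by
        rw [lintegral_add_left measurable_const, lintegral_const,
          lintegral_const_mul _ (Measurable.tsum fun n => measurable_one.indicator (hE n)),
          lintegral_tsum fun n => (measurable_one.indicator (hE n)).aemeasurable]
        simp only [lintegral_indicator_one (hE _)]
    _ < ∞ := by finiteness

lemma isNegInvariant_of_measure_preimage_neg {G : Type*} [MeasurableSpace G] [Neg G]
    [MeasurableNeg G] {μ : Measure G}
    (hsym : ∀ A : Set G, MeasurableSet A → μ A = μ ((fun t : G => -t) ⁻¹' A)) :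
    μ.IsNegInvariant := by
  refine ⟨Measure.ext fun A hA => ?_⟩
  rw [Measure.neg_def, Measure.map_apply measurable_neg hA]
  exact (hsym A hA).symm

namespace ParabolicSelfMap

variable {β : ℝ} {μ : Measure ℝ} {z z₀ : ℂ}

noncomputable def nevKernel (z : ℂ) (t : ℝ) : ℂ := (1 + (t : ℂ) * z) / ((t : ℂ) - z)

noncomputable def poissonMass (μ : Measure ℝ) (z : ℂ) : ℝ :=
  ∫ t : ℝ, (1 + t ^ 2) / Complex.normSq ((t : ℂ) - z) ∂μ

lemma fmap_eq (β : ℝ) (μ : Measure ℝ) (z : ℂ) :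
    fmap β μ z = z + β + ∫ t, nevKernel z t ∂μ := rfl

lemma ofReal_sub_ne_zero (hz : z.im ≠ 0) (t : ℝ) : (t : ℂ) - z ≠ 0 := fun h =>
  hz (by simpa using congrArg Complex.im h)

lemma nevKernel_eq (hz : z.im ≠ 0) (t : ℝ) :
    nevKernel z t = z + (1 + z ^ 2) * ((t : ℂ) - z)⁻¹ := by
  rw [nevKernel]
  field_simp [ofReal_sub_ne_zero hz t]
  ring

lemma nevKernel_im (z : ℂ) (t : ℝ) :
    (nevKernel z t).im = z.im * ((1 + t ^ 2) / Complex.normSq ((t : ℂ) - z)) := by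
  rw [nevKernel, Complex.div_im]
  simp only [Complex.add_re, Complex.add_im, Complex.mul_re, Complex.mul_im, Complex.sub_re,
    Complex.sub_im, Complex.ofReal_re, Complex.ofReal_im, Complex.one_re, Complex.one_im]
  ring

lemma im_mul_abs_re_div_le (hz : 0 ≤ z.im) {s : ℝ} (hs : 0 ≤ s) :
    z.im * |(z / (s - z ^ 2)).re| ≤ |z.re| * (z / (s - z ^ 2)).im := by
  have hw_re : ((s : ℂ) - z ^ 2).re = s - z.re ^ 2 + z.im ^ 2 := by
    simp only [sq, Complex.sub_re, Complex.ofReal_re, Complex.mul_re]; ring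
  have hw_im : ((s : ℂ) - z ^ 2).im = -(2 * z.re * z.im) := by
    simp only [sq, Complex.sub_im, Complex.ofReal_im, Complex.mul_im]; ring
  set N := Complex.normSq ((s : ℂ) - z ^ 2)
  have hre : (z / (s - z ^ 2)).re = z.re * (s - z.re ^ 2 - z.im ^ 2) / N := by
    rw [Complex.div_re, hw_re, hw_im]; ring
  have him : (z / (s - z ^ 2)).im = z.im * (s + z.re ^ 2 + z.im ^ 2) / N := by
    rw [Complex.div_im, hw_re, hw_im]; ring
  have hN : 0 ≤ N := Complex.normSq_nonneg _
  have habs : |s - z.re ^ 2 - z.im ^ 2| ≤ s + z.re ^ 2 + z.im ^ 2 :=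
    abs_le.mpr ⟨by nlinarith [sq_nonneg z.re, sq_nonneg z.im], by nlinarith⟩
  rw [hre, him, abs_div, abs_mul, abs_of_nonneg hN]
  calc z.im * (|z.re| * |s - z.re ^ 2 - z.im ^ 2| / N)
      = z.im * |z.re| / N * |s - z.re ^ 2 - z.im ^ 2| := by ring
    _ ≤ z.im * |z.re| / N * (s + z.re ^ 2 + z.im ^ 2) := by gcongr
    _ = |z.re| * (z.im * (s + z.re ^ 2 + z.im ^ 2) / N) := by ring

lemma nevKernel_add_nevKernel_neg (hz : z.im ≠ 0) (t : ℝ) :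
    nevKernel z t + nevKernel z (-t) =
      ((2 * (1 + t ^ 2) : ℝ) : ℂ) * (z / ((t ^ 2 : ℝ) - z ^ 2)) := by
  have h₁ := ofReal_sub_ne_zero hz t
  have h₂ : -(t : ℂ) - z ≠ 0 := by simpa using ofReal_sub_ne_zero hz (-t)
  have h₃ : (t : ℂ) ^ 2 - z ^ 2 ≠ 0 := by
    rw [show (t : ℂ) ^ 2 - z ^ 2 = -((-t - z) * (t - z)) by ring]
    exact neg_ne_zero.mpr (mul_ne_zero h₂ h₁)
  simp only [nevKernel, Complex.ofReal_neg]
  push_cast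
  field_simp
  ring

lemma poissonMass_nonneg : 0 ≤ poissonMass μ z :=
  integral_nonneg fun t => div_nonneg (by positivity) (Complex.normSq_nonneg _)

variable [IsFiniteMeasure μ]

lemma integrable_nevKernel (hz : z.im ≠ 0) : Integrable (nevKernel z) μ := by
  have hcont : Continuous fun t : ℝ => ((t : ℂ) - z)⁻¹ :=
    (Complex.continuous_ofReal.sub continuous_const).inv₀ (ofReal_sub_ne_zero hz)
  have hbdd : Integrable (fun t : ℝ => ((t : ℂ) - z)⁻¹) μ := by
    refine (integrable_const |z.im|⁻¹).mono' hcont.aestronglyMeasurable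
      (Eventually.of_forall fun t => ?_)
    rw [norm_inv]
    refine inv_anti₀ (abs_pos.mpr hz) ?_
    simpa using Complex.abs_im_le_norm ((t : ℂ) - z)
  rw [funext (nevKernel_eq hz)]
  exact (integrable_const z).add (hbdd.const_mul _)

lemma integrable_poissonMass_integrand (hz : z.im ≠ 0) :
    Integrable (fun t : ℝ => (1 + t ^ 2) / Complex.normSq ((t : ℂ) - z)) μ := by
  refine ((integrable_nevKernel hz).im.const_mul z.im⁻¹).congr (Eventually.of_forall fun t => ?_)
  simp only [RCLike.im_to_complex, nevKernel_im, inv_mul_cancel_left₀ hz]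

lemma im_integral_nevKernel (hz : z.im ≠ 0) :
    (∫ t, nevKernel z t ∂μ).im = z.im * poissonMass μ z := by
  have h := integral_im (integrable_nevKernel (μ := μ) hz)
  simp only [RCLike.im_to_complex] at h
  simp only [← h, nevKernel_im, poissonMass, integral_const_mul]

lemma abs_re_integral_nevKernel_le [μ.IsNegInvariant] (hz : 0 < z.im) :
    |(∫ t, nevKernel z t ∂μ).re| ≤ |z.re| * poissonMass μ z := by
  set ζ : ℝ → ℂ := fun t => nevKernel z t + nevKernel z (-t)
  have hint := integrable_nevKernel (μ := μ) hz.ne'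
  have hζ : ∫ t, ζ t ∂μ = ((2 : ℝ) : ℂ) * ∫ t, nevKernel z t ∂μ := by
    rw [integral_add hint hint.comp_neg, integral_neg_eq_self (nevKernel z)]
    push_cast
    ring
  have hcone : ∀ t, |(ζ t).re| ≤ |z.re| / z.im * (ζ t).im := by
    intro t
    have hc : (0 : ℝ) ≤ 2 * (1 + t ^ 2) := by positivity
    simp only [ζ, nevKernel_add_nevKernel_neg hz.ne', Complex.re_ofReal_mul,
      Complex.im_ofReal_mul, abs_mul, abs_of_nonneg hc]
    rw [div_mul_eq_mul_div, le_div_iff₀ hz]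
    nlinarith [im_mul_abs_re_div_le hz.le (sq_nonneg t)]
  have hζint : Integrable ζ μ := hint.add hint.comp_neg
  have key := abs_re_integral_le_of_abs_re_le hζint hcone
  rw [hζ, Complex.re_ofReal_mul, Complex.im_ofReal_mul, im_integral_nevKernel hz.ne', abs_mul,
    abs_two, show |z.re| / z.im * (2 * (z.im * poissonMass μ z)) = 2 * (|z.re| * poissonMass μ z) by
      field_simp] at key
  linarith

lemma im_fmap (hz : z.im ≠ 0) : (fmap β μ z).im = z.im * (1 + poissonMass μ z) := by
  rw [fmap_eq, Complex.add_im, Complex.add_im, im_integral_nevKernel hz]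
  simp only [Complex.ofReal_im]
  ring

lemma im_le_im_fmap (hz : 0 < z.im) : z.im ≤ (fmap β μ z).im := by
  rw [im_fmap hz.ne']
  exact le_mul_of_one_le_right hz.le (le_add_of_nonneg_right poissonMass_nonneg)

lemma abs_re_div_im_fmap_le [μ.IsNegInvariant] (hz : 0 < z.im) :
    |(fmap β μ z).re| / (fmap β μ z).im ≤ |z.re| / z.im + |β| / (fmap β μ z).im := by
  have hre : |(fmap β μ z).re| ≤ |z.re| * (1 + poissonMass μ z) + |β| := by
    have h := abs_re_integral_nevKernel_le (μ := μ) hz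
    rw [fmap_eq, Complex.add_re, Complex.add_re, Complex.ofReal_re]
    linarith [abs_add_three z.re β (∫ t, nevKernel z t ∂μ).re]
  have him := im_fmap (β := β) (μ := μ) hz.ne'
  have hpos : 0 < (fmap β μ z).im := hz.trans_le (im_le_im_fmap hz)
  calc |(fmap β μ z).re| / (fmap β μ z).im
      ≤ (|z.re| * (1 + poissonMass μ z) + |β|) / (fmap β μ z).im := by gcongr
    _ = |z.re| / z.im + |β| / (fmap β μ z).im := by
        have hI : 1 + poissonMass μ z ≠ 0 := by linarith [poissonMass_nonneg (μ := μ) (z := z)]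
        rw [add_div, him, mul_div_mul_right _ _ hI]

lemma measure_norm_le_abs_le (hz : z.im ≠ 0) :
    μ {t : ℝ | ‖z‖ ≤ |t|} ≤ ENNReal.ofReal (4 * poissonMass μ z) := by
  set g : ℝ → ℝ := fun t => 4 * ((1 + t ^ 2) / Complex.normSq ((t : ℂ) - z))
  have hint : Integrable g μ := (integrable_poissonMass_integrand hz).const_mul 4
  have hg : 0 ≤ g := fun t =>
    mul_nonneg zero_le_four (div_nonneg (by positivity) (Complex.normSq_nonneg _))
  have hle : ∀ t : ℝ, ‖z‖ ≤ |t| → 1 ≤ g t := by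
    intro t ht
    have hpos : 0 < Complex.normSq ((t : ℂ) - z) :=
      Complex.normSq_pos.mpr (ofReal_sub_ne_zero hz t)
    have hnorm : ‖(t : ℂ) - z‖ ≤ 2 * |t| := by
      have := norm_sub_le (t : ℂ) z
      rw [Complex.norm_real, Real.norm_eq_abs] at this
      linarith
    rw [show g t = 4 * (1 + t ^ 2) / Complex.normSq ((t : ℂ) - z) from mul_div_assoc' _ _ _,
      one_le_div hpos, ← Complex.sq_norm]
    nlinarith [norm_nonneg ((t : ℂ) - z), sq_abs t]
  calc μ {t : ℝ | ‖z‖ ≤ |t|}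
      ≤ μ {t | 1 ≤ ENNReal.ofReal (g t)} :=
        measure_mono fun t ht => ENNReal.one_le_ofReal.mpr (hle t ht)
    _ ≤ (∫⁻ t, ENNReal.ofReal (g t) ∂μ) / 1 :=
        meas_ge_le_lintegral_div hint.aemeasurable.ennreal_ofReal one_ne_zero ENNReal.one_ne_top
    _ = ENNReal.ofReal (4 * poissonMass μ z) := by
        rw [div_one, ← ofReal_integral_eq_lintegral_ofReal hint (Eventually.of_forall hg),
          integral_const_mul]
        rfl

lemma im_iterate_pos (hz₀ : 0 < z₀.im) (n : ℕ) : 0 < ((fmap β μ)^[n] z₀).im := by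
  induction n with
  | zero => exact hz₀
  | succ n ih =>
    rw [Function.iterate_succ_apply']
    exact ih.trans_le (im_le_im_fmap ih)

lemma monotone_im_iterate (hz₀ : 0 < z₀.im) :
    Monotone fun n => ((fmap β μ)^[n] z₀).im :=
  monotone_nat_of_le_succ fun n => by
    simp only [Function.iterate_succ_apply']
    exact im_le_im_fmap (im_iterate_pos hz₀ n)

lemma abs_re_div_im_iterate_le [μ.IsNegInvariant] (hz₀ : 0 < z₀.im) (n : ℕ) :
    |((fmap β μ)^[n] z₀).re| / ((fmap β μ)^[n] z₀).im ≤
      |z₀.re| / z₀.im + |β| * ∑ k ∈ Finset.range n, (((fmap β μ)^[k + 1] z₀).im)⁻¹ := by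
  have hstep : ∀ k, |((fmap β μ)^[k + 1] z₀).re| / ((fmap β μ)^[k + 1] z₀).im
      - |((fmap β μ)^[k] z₀).re| / ((fmap β μ)^[k] z₀).im
      ≤ |β| * (((fmap β μ)^[k + 1] z₀).im)⁻¹ := by
    intro k
    have := abs_re_div_im_fmap_le (β := β) (μ := μ) (im_iterate_pos (β := β) (μ := μ) hz₀ k)
    rw [← Function.iterate_succ_apply' (fmap β μ)] at this
    rw [← div_eq_mul_inv]
    linarith
  have := Finset.sum_le_sum fun k (_ : k ∈ Finset.range n) => hstep k
  rw [Finset.sum_range_sub (fun k => |((fmap β μ)^[k] z₀).re| / ((fmap β μ)^[k] z₀).im),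
    ← Finset.mul_sum] at this
  rw [Function.iterate_zero_apply] at this
  linarith

lemma mul_sum_poissonMass_iterate_le (hz₀ : 0 < z₀.im) (n : ℕ) :
    z₀.im * ∑ k ∈ Finset.range n, poissonMass μ ((fmap β μ)^[k] z₀) ≤
      ((fmap β μ)^[n] z₀).im - z₀.im := by
  have hstep : ∀ k, z₀.im * poissonMass μ ((fmap β μ)^[k] z₀) ≤
      ((fmap β μ)^[k + 1] z₀).im - ((fmap β μ)^[k] z₀).im := by
    intro k
    rw [Function.iterate_succ_apply', im_fmap (im_iterate_pos hz₀ k).ne']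
    have h0 : z₀.im ≤ ((fmap β μ)^[k] z₀).im := monotone_im_iterate hz₀ (Nat.zero_le k)
    nlinarith [poissonMass_nonneg (μ := μ) (z := (fmap β μ)^[k] z₀)]
  have := Finset.sum_le_sum fun k (_ : k ∈ Finset.range n) => hstep k
  rwa [Finset.sum_range_sub (fun k => ((fmap β μ)^[k] z₀).im), ← Finset.mul_sum,
    Function.iterate_zero_apply] at this

lemma norm_iterate_le_of_forall_im_iterate_le [μ.IsNegInvariant] (hz₀ : 0 < z₀.im) {L : ℝ}
    (hL : ∀ n, ((fmap β μ)^[n] z₀).im ≤ L) (n : ℕ) :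
    ‖(fmap β μ)^[n] z₀‖ ≤ L * (1 + |z₀.re| / z₀.im) + L * (|β| + 1) / z₀.im * n := by
  have hy := im_iterate_pos (β := β) (μ := μ) hz₀ n
  have hL0 : 0 ≤ L := hz₀.le.trans (hL 0)
  have hsum : ∑ k ∈ Finset.range n, (((fmap β μ)^[k + 1] z₀).im)⁻¹ ≤ n / z₀.im := by
    calc ∑ k ∈ Finset.range n, (((fmap β μ)^[k + 1] z₀).im)⁻¹
        ≤ ∑ _k ∈ Finset.range n, z₀.im⁻¹ :=
          Finset.sum_le_sum fun k _ => inv_anti₀ hz₀ (monotone_im_iterate hz₀ (Nat.zero_le _))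
      _ = n / z₀.im := by simp [div_eq_mul_inv]
  have hratio : |((fmap β μ)^[n] z₀).re| / ((fmap β μ)^[n] z₀).im ≤
      |z₀.re| / z₀.im + |β| * (n / z₀.im) :=
    (abs_re_div_im_iterate_le hz₀ n).trans (by gcongr)
  rw [div_le_iff₀ hy] at hratio
  have hre : |((fmap β μ)^[n] z₀).re| ≤ L * (|z₀.re| / z₀.im + |β| * (n / z₀.im)) :=
    hratio.trans (by rw [mul_comm]; gcongr; exact hL n)
  have hβn : L * (|β| * (n / z₀.im)) ≤ L * (|β| + 1) / z₀.im * n := by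
    rw [show L * (|β| * (n / z₀.im)) = L * |β| / z₀.im * n by ring]
    gcongr
    linarith
  calc ‖(fmap β μ)^[n] z₀‖
      ≤ |((fmap β μ)^[n] z₀).re| + |((fmap β μ)^[n] z₀).im| := Complex.norm_le_abs_re_add_abs_im _
    _ ≤ _ := by rw [abs_of_pos hy]; nlinarith [hL n]

lemma integrable_of_forall_im_iterate_le [μ.IsNegInvariant] (hz₀ : 0 < z₀.im) {L : ℝ}
    (hL : ∀ n, ((fmap β μ)^[n] z₀).im ≤ L) : Integrable (fun t : ℝ => t) μ := by
  have hb : 0 < L * (|β| + 1) / z₀.im :=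
    div_pos (mul_pos (hz₀.trans_le (hL 0)) (by positivity)) hz₀
  have hsummable : Summable fun n => 4 * poissonMass μ ((fmap β μ)^[n] z₀) := by
    refine (summable_of_sum_range_le (c := L / z₀.im) (fun n => poissonMass_nonneg)
      fun n => (le_div_iff₀' hz₀).mpr ?_).mul_left 4
    linarith [mul_sum_poissonMass_iterate_le (β := β) (μ := μ) hz₀ n, hL n]
  refine integrable_of_tsum_measure_le_abs_ne_top measurable_id (L * (1 + |z₀.re| / z₀.im)) hb
    (ne_top_of_le_ne_top
      (ENNReal.ofReal_ne_top (r := ∑' n, 4 * poissonMass μ ((fmap β μ)^[n] z₀))) ?_)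
  rw [ENNReal.ofReal_tsum_of_nonneg (fun n => mul_nonneg zero_le_four poissonMass_nonneg)
    hsummable]
  exact ENNReal.tsum_le_tsum fun n =>
    (measure_mono fun t ht => (norm_iterate_le_of_forall_im_iterate_le hz₀ hL n).trans ht).trans
      (measure_norm_le_abs_le (im_iterate_pos hz₀ n).ne')

lemma tendsto_im_iterate_atTop [μ.IsNegInvariant] (hμ : ¬ Integrable (fun t : ℝ => t) μ)
    (hz₀ : 0 < z₀.im) : Tendsto (fun n => ((fmap β μ)^[n] z₀).im) atTop atTop := by
  refine tendsto_atTop_atTop_of_monotone (monotone_im_iterate hz₀) fun L => ?_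
  by_contra! h
  exact hμ (integrable_of_forall_im_iterate_le hz₀ fun n => (h n).le)

end ParabolicSelfMap

open ParabolicSelfMap in
theorem stmt_13_general (β : ℝ) (μ : Measure ℝ) [IsFiniteMeasure μ]
    (hsym : ∀ A : Set ℝ, MeasurableSet A → μ A = μ ((fun t : ℝ => -t) ⁻¹' A))
    (hμ : ¬ Integrable (fun t : ℝ => t) μ) :
    ∀ z₀ : ℂ, 0 < z₀.im →
      Tendsto
        (fun n : ℕ => |((fmap β μ)^[n] z₀).re| / (n * ((fmap β μ)^[n] z₀).im))
        atTop (𝓝 0) := by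
  intro z₀ hz₀
  have := isNegInvariant_of_measure_preimage_neg hsym
  have hinv : Tendsto (fun k : ℕ => (((fmap β μ)^[k + 1] z₀).im)⁻¹) atTop (𝓝 0) :=
    ((tendsto_im_iterate_atTop hμ hz₀).comp (tendsto_add_atTop_nat 1)).inv_tendsto_atTop
  have hbound : Tendsto (fun n : ℕ => (n : ℝ)⁻¹ * (|z₀.re| / z₀.im +
      |β| * ∑ k ∈ Finset.range n, (((fmap β μ)^[k + 1] z₀).im)⁻¹)) atTop (𝓝 0) := by
    have := (tendsto_inv_atTop_nhds_zero_nat.mul_const (|z₀.re| / z₀.im)).add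
      (hinv.cesaro.const_mul |β|)
    simp only [zero_mul, mul_zero, add_zero] at this
    refine this.congr fun n => ?_
    ring
  refine squeeze_zero (fun n => ?_) (fun n => ?_) hbound
  · exact div_nonneg (abs_nonneg _) (mul_nonneg n.cast_nonneg (im_iterate_pos hz₀ n).le)
  · rw [mul_comm (n : ℝ), ← div_div, div_eq_inv_mul _ (n : ℝ)]
    exact mul_le_mul_of_nonneg_left (abs_re_div_im_iterate_le hz₀ n) (inv_nonneg.mpr n.cast_nonneg)

theorem stmt_13 (β : ℝ) (μ : Measure ℝ) [IsFiniteMeasure μ]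
    (hsym : ∀ A : Set ℝ, MeasurableSet A → μ A = μ ((fun t : ℝ => -t) ⁻¹' A))
    (hμ : ¬ Integrable (fun t : ℝ => t) μ) (hβ : β ≠ 0) :
    ∀ z₀ : ℂ, 0 < z₀.im →
      Tendsto
        (fun n : ℕ => |((fmap β μ)^[n] z₀).re| / (n * ((fmap β μ)^[n] z₀).im))
        atTop (𝓝 0) :=
  stmt_13_general β μ hsym hμ
end

section
/- Let a ∈ ℝ and let μ be a finite positive Borel measure on ℝ with μ((a,+∞)) = 0 and ∫_ℝ |t| dμ(t) = ∞. For real x > a define p(x) = ∫_{(−∞,a]} (1+tx)/(t−x) dμ(t) (a real number). Then p(x) → +∞ as x → +∞. Moreover, p is increasing on (a,+∞), and for every x > a and y ∈ ℝ one has Re p(x+iy) ≥ p(x), where p(z) = ∫_{(−∞,a]} (1+tz)/(t−z) dμ(t) for complex z ∉ (−∞,a]. -/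
/-!
Writing `(1 + t x)/(t - x) = -t - (1 + t²)/(x - t)`, each integrand is strictly increasing in
`x > t`, which makes `p` strictly increasing, and tends to `-t` as `x → ∞`. If `p` were bounded
above, Fatou's lemma applied to `p (x₀ + n) - p x₀ = ∫ (1 + t²) ((x₀ - t)⁻¹ - (x₀ + n - t)⁻¹) dμ`
would make `-t - (1 + t x₀)/(t - x₀)`, hence `t`, integrable. For `z = x + iy` the same formula
and `Re (z - t)⁻¹ = (x - t)/|z - t|² ≤ (x - t)⁻¹` give `Re p(z) ≥ p(x)`.
-/

open MeasureTheory Filter Complex Topology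

theorem kernel_eq_neg_sub_div {K : Type*} [Field K] {t x : K} (h : t ≠ x) :
    (1 + t * x) / (t - x) = -t - (1 + t ^ 2) / (x - t) := by
  have h₁ : t - x ≠ 0 := sub_ne_zero.2 h
  have h₂ : x - t ≠ 0 := sub_ne_zero.2 h.symm
  field_simp
  ring

theorem kernel_eq_add_div {K : Type*} [Field K] {t x : K} (h : t ≠ x) :
    (1 + t * x) / (t - x) = x + (1 + x ^ 2) / (t - x) := by
  have h₁ : t - x ≠ 0 := sub_ne_zero.2 h
  field_simp
  ring

theorem Complex.inv_re_le_re_inv {w : ℂ} (hw : 0 < w.re) : (w⁻¹).re ≤ (w.re)⁻¹ := by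
  have hsq : w.re * w.re ≤ normSq w := by
    rw [normSq_apply]
    nlinarith [mul_self_nonneg w.im]
  calc (w⁻¹).re = w.re / normSq w := inv_re w
    _ ≤ w.re / (w.re * w.re) := div_le_div_of_nonneg_left hw.le (by positivity) hsq
    _ = (w.re)⁻¹ := by field_simp

theorem setIntegral_lt_setIntegral_of_forall_lt {X : Type*} [MeasurableSpace X] {μ : Measure X}
    {s : Set X} {f g : X → ℝ} (hs : MeasurableSet s) (hμ : μ s ≠ 0) (hf : IntegrableOn f s μ)
    (hg : IntegrableOn g s μ) (hfg : ∀ x ∈ s, f x < g x) :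
    ∫ x in s, f x ∂μ < ∫ x in s, g x ∂μ := by
  rw [← sub_pos, ← integral_sub hg hf]
  change 0 < ∫ x in s, (g - f) x ∂μ
  rw [setIntegral_pos_iff_support_of_nonneg_ae _ (hg.sub hf)]
  · refine (pos_iff_ne_zero.2 hμ).trans_le (measure_mono fun x hx => ⟨?_, hx⟩)
    exact (sub_pos.2 (hfg x hx)).ne'
  · filter_upwards [ae_restrict_mem hs] with x hx
    exact (sub_pos.2 (hfg x hx)).le

theorem strictMonoOn_kernel (t : ℝ) :
    StrictMonoOn (fun x : ℝ => (1 + t * x) / (t - x)) (Set.Ioi t) := by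
  intro x (hx : t < x) y (hy : t < y) hxy
  simp only [kernel_eq_neg_sub_div hx.ne, kernel_eq_neg_sub_div hy.ne]
  have : (1 + t ^ 2) / (y - t) < (1 + t ^ 2) / (x - t) :=
    div_lt_div_of_pos_left (by positivity) (by linarith) (by linarith)
  linarith

theorem tendsto_kernel_atTop (t : ℝ) :
    Tendsto (fun x : ℝ => (1 + t * x) / (t - x)) atTop (𝓝 (-t)) := by
  have h : Tendsto (fun x : ℝ => -t - (1 + t ^ 2) / (x - t)) atTop (𝓝 (-t - 0)) :=
    tendsto_const_nhds.sub
      (tendsto_const_nhds.div_atTop (tendsto_atTop_add_const_right _ _ tendsto_id))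
  rw [sub_zero] at h
  refine h.congr' ?_
  filter_upwards [eventually_gt_atTop t] with x hx
  exact (kernel_eq_neg_sub_div hx.ne).symm

theorem kernel_le_re_kernel {t : ℝ} {z : ℂ} (ht : t < z.re) :
    (1 + t * z.re) / (t - z.re) ≤ ((1 + t * z) / (t - z)).re := by
  have hne : (t : ℂ) ≠ z := fun h => by simp [← h] at ht
  have hpos : 0 < (z - t).re := by simpa using ht
  rw [kernel_eq_neg_sub_div ht.ne, kernel_eq_neg_sub_div hne, div_eq_mul_inv, div_eq_mul_inv]
  have hcast : (1 + (t : ℂ) ^ 2) = ((1 + t ^ 2 : ℝ) : ℂ) := by push_cast; ring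
  rw [hcast, sub_re, neg_re, ofReal_re, re_ofReal_mul]
  have hinv := Complex.inv_re_le_re_inv hpos
  simp only [sub_re, ofReal_re] at hinv
  gcongr

section Integral

variable {μ : Measure ℝ} [IsFiniteMeasure μ] {a : ℝ}

theorem integrableOn_kernel_Iic {z : ℂ} (hz : a < z.re) :
    IntegrableOn (fun t : ℝ => (1 + t * z) / (t - z)) (Set.Iic a) μ := by
  refine Integrable.mono' (integrable_const (‖z‖ + ‖1 + z ^ 2‖ / (z.re - a)))
    (Measurable.aestronglyMeasurable (by fun_prop)) ?_
  filter_upwards [ae_restrict_mem measurableSet_Iic] with t (ht : t ≤ a)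
  have hne : (t : ℂ) ≠ z := fun h => by simp [← h] at hz; linarith
  have hdist : z.re - a ≤ ‖(t : ℂ) - z‖ :=
    calc z.re - a ≤ |((t : ℂ) - z).re| := by
          rw [sub_re, ofReal_re, abs_of_nonpos (by linarith)]; linarith
      _ ≤ ‖(t : ℂ) - z‖ := abs_re_le_norm _
  rw [kernel_eq_add_div hne]
  calc ‖z + (1 + z ^ 2) / (t - z)‖ ≤ ‖z‖ + ‖1 + z ^ 2‖ / ‖(t : ℂ) - z‖ := by
        rw [← norm_div]; exact norm_add_le _ _
    _ ≤ ‖z‖ + ‖1 + z ^ 2‖ / (z.re - a) := by gcongr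

theorem integrableOn_kernel_Iic_real {x : ℝ} (hx : a < x) :
    IntegrableOn (fun t : ℝ => (1 + t * x) / (t - x)) (Set.Iic a) μ := by
  have h := (integrableOn_kernel_Iic (μ := μ) (z := x) (by simpa using hx)).re
  refine IntegrableOn.congr_fun h (fun t _ => ?_) measurableSet_Iic
  norm_cast

theorem integral_kernel_le_re_integral_kernel {z : ℂ} (hz : a < z.re) :
    ∫ t in Set.Iic a, (1 + t * z.re) / (t - z.re) ∂μ ≤
      (∫ t in Set.Iic a, (1 + t * z) / (t - z) ∂μ).re := by
  have hre := integral_re (integrableOn_kernel_Iic (μ := μ) hz)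
  simp only [RCLike.re_to_complex] at hre
  rw [← hre]
  exact setIntegral_mono_on (integrableOn_kernel_Iic_real hz) (integrableOn_kernel_Iic hz).re
    measurableSet_Iic fun t ht => kernel_le_re_kernel (lt_of_le_of_lt ht hz)

theorem strictMonoOn_integral_kernel (hμ : μ (Set.Iic a) ≠ 0) :
    StrictMonoOn (fun x : ℝ => ∫ t in Set.Iic a, (1 + t * x) / (t - x) ∂μ) (Set.Ioi a) :=
  fun x (hx : a < x) y (hy : a < y) hxy =>
    setIntegral_lt_setIntegral_of_forall_lt measurableSet_Iic hμ (integrableOn_kernel_Iic_real hx)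
      (integrableOn_kernel_Iic_real hy) fun _ ht =>
        strictMonoOn_kernel _ (lt_of_le_of_lt ht hx) (lt_of_le_of_lt ht hy) hxy

theorem integrableOn_id_of_integral_kernel_le {M : ℝ}
    (hM : ∀ x, a < x → ∫ t in Set.Iic a, (1 + t * x) / (t - x) ∂μ ≤ M) :
    IntegrableOn (fun t : ℝ => t) (Set.Iic a) μ := by
  set k : ℝ → ℝ → ℝ := fun x t => (1 + t * x) / (t - x)
  set x₀ := a + 1
  have hx₀ : a < x₀ := lt_add_one a
  have hxn (n : ℕ) : a < x₀ + n := hx₀.trans_le (le_add_of_nonneg_right n.cast_nonneg)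
  set G : ℕ → ℝ → ℝ := fun n t => k (x₀ + n) t - k x₀ t
  have hG_int (n : ℕ) : IntegrableOn (G n) (Set.Iic a) μ :=
    (integrableOn_kernel_Iic_real (hxn n)).sub (integrableOn_kernel_Iic_real hx₀)
  have hG_nonneg (n : ℕ) : 0 ≤ᵐ[μ.restrict (Set.Iic a)] G n := by
    filter_upwards [ae_restrict_mem measurableSet_Iic] with t (ht : t ≤ a)
    exact sub_nonneg.2 <| (strictMonoOn_kernel t).monotoneOn (ht.trans_lt hx₀)
      (ht.trans_lt (hxn n)) (le_add_of_nonneg_right n.cast_nonneg)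
  have hlim : IntegrableOn (fun t => -t - k x₀ t) (Set.Iic a) μ := by
    refine integrable_of_tendsto (G := G) (ae_of_all _ fun t => ?_)
      (fun n => (hG_int n).aestronglyMeasurable) (ne_top_of_le_ne_top
        (ENNReal.ofReal_ne_top (r := M - ∫ t in Set.Iic a, k x₀ t ∂μ))
        (liminf_le_of_frequently_le' (Frequently.of_forall fun n => ?_)))
    · exact ((tendsto_kernel_atTop t).comp (tendsto_atTop_add_const_left _ _
        tendsto_natCast_atTop_atTop)).sub_const _
    · rw [lintegral_enorm_of_ae_nonneg (hG_nonneg n),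
        ← ofReal_integral_eq_lintegral_ofReal (hG_int n) (hG_nonneg n),
        integral_sub (integrableOn_kernel_Iic_real (hxn n)) (integrableOn_kernel_Iic_real hx₀)]
      exact ENNReal.ofReal_le_ofReal (sub_le_sub_right (hM _ (hxn n)) _)
  refine (hlim.add (integrableOn_kernel_Iic_real hx₀)).neg.congr_fun (fun t _ => ?_)
    measurableSet_Iic
  simp only [Pi.neg_apply, Pi.add_apply]
  ring

theorem tendsto_integral_kernel_atTop (hμ : ¬ IntegrableOn (fun t : ℝ => t) (Set.Iic a) μ) :
    Tendsto (fun x : ℝ => ∫ t in Set.Iic a, (1 + t * x) / (t - x) ∂μ) atTop atTop := by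
  have hmono := (strictMonoOn_integral_kernel fun h => hμ (.of_measure_zero h)).monotoneOn
  refine tendsto_atTop.2 fun M => ?_
  obtain ⟨x₀, hx₀, hM⟩ : ∃ x₀, a < x₀ ∧ M ≤ ∫ t in Set.Iic a, (1 + t * x₀) / (t - x₀) ∂μ := by
    by_contra! h
    exact hμ (integrableOn_id_of_integral_kernel_le fun x hx => (h x hx).le)
  filter_upwards [eventually_ge_atTop x₀] with x hx
  exact hM.trans (hmono hx₀ (hx₀.trans_le hx) hx)

end Integral

theorem stmt_17 (a : ℝ) (μ : Measure ℝ) [IsFiniteMeasure μ]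
    (hsupp : μ (Set.Ioi a) = 0) (hL1 : ¬ Integrable (fun t : ℝ => t) μ) :
    Tendsto (fun x : ℝ => ∫ t in Set.Iic a, (1 + t * x) / (t - x) ∂μ)
      atTop atTop ∧
    StrictMonoOn (fun x : ℝ => ∫ t in Set.Iic a, (1 + t * x) / (t - x) ∂μ)
      (Set.Ioi a) ∧
    (∀ x : ℝ, a < x → ∀ y : ℝ,
      (∫ t in Set.Iic a, (1 + t * x) / (t - x) ∂μ) ≤
        (∫ t in Set.Iic a,
          (1 + (t : ℂ) * ((x : ℂ) + (y : ℂ) * Complex.I)) /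
            ((t : ℂ) - ((x : ℂ) + (y : ℂ) * Complex.I)) ∂μ).re) := by
  have hrestrict : μ.restrict (Set.Iic a) = μ :=
    Measure.restrict_eq_self_of_ae_mem (by rwa [ae_iff, ← Set.compl_def, Set.compl_Iic])
  have hL1_Iic : ¬ IntegrableOn (fun t : ℝ => t) (Set.Iic a) μ := by
    rwa [IntegrableOn, hrestrict]
  refine ⟨tendsto_integral_kernel_atTop hL1_Iic,
    strictMonoOn_integral_kernel fun h => hL1_Iic (.of_measure_zero h), fun x hx y => ?_⟩
  have hre : ((x : ℂ) + (y : ℂ) * I).re = x := by simp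
  have h := integral_kernel_le_re_integral_kernel (μ := μ) (z := x + y * I) (by rwa [hre])
  rwa [hre] at h
end
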